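/- Let U : ℝ³ → M₂(ℂ) take values in SU(2) and be differentiable at a point x. Then the strain matrix 𝕃(x) ∈ M₃(ℝ) with entries 𝕃ᵢⱼ(x) = −Re Tr(Lᵢ(x)·Lⱼ(x)) is symmetric and positive semidefinite; indeed 𝕃ᵢⱼ(x) = Re Tr(Lᵢ(x)·Lⱼ(x)*), the real Frobenius inner product of Lᵢ(x) and Lⱼ(x). -/

import Mathlib

/-!
Differentiating `U* U = 1` shows that each current `Lᵢ = U* ∂ᵢU` is skew-Hermitian, so
`-Re Tr(Lᵢ Lⱼ) = Re Tr(Lᵢ Lⱼ*)`. The right-hand side is the real inner product of `Lᵢ` and `Lⱼ`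
viewed as vectors of `ℂ^(2×2) ≅ ℝ⁸`, so `𝕃` is a real Gram matrix, hence symmetric and positive
semidefinite.
-/

open Matrix

attribute [local instance] Matrix.frobeniusNormedAddCommGroup Matrix.frobeniusNormedSpace
attribute [local instance] Matrix.frobeniusNormedRing Matrix.frobeniusNormedAlgebra

open scoped InnerProductSpace

theorem star_star_mul_fderiv_eq_neg {E A : Type*}
    [NormedAddCommGroup E] [NormedSpace ℝ E] [NormedRing A] [NormedAlgebra ℝ A] [StarRing A]
    [ContinuousStar A] [StarModule ℝ A] {U : E → A} {x : E} (hU : DifferentiableAt ℝ U x)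
    (hunitary : ∀ᶠ y in nhds x, star (U y) * U y = 1) (v : E) :
    star (star (U x) * fderiv ℝ U x v) = -(star (U x) * fderiv ℝ U x v) := by
  have hconst : HasFDerivAt (fun y => star (U y) * U y) (0 : E →L[ℝ] A) x :=
    (hasFDerivAt_const (1 : A) x).congr_of_eventuallyEq hunitary
  have hleibniz : star (U x) * fderiv ℝ U x v + star (fderiv ℝ U x v) * U x = 0 :=
    DFunLike.congr_fun ((hU.hasFDerivAt.star.mul' hU.hasFDerivAt).unique hconst) v
  rw [star_mul, star_star]
  exact eq_neg_of_add_eq_zero_right hleibniz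

namespace Matrix

variable {ι m n : Type*} [Fintype m] [Fintype n]

def frobeniusVec (A : Matrix m n ℂ) : PiLp 2 fun _ : m × n => ℂ :=
  WithLp.toLp 2 fun p => A p.1 p.2

theorem re_trace_mul_conjTranspose_eq_real_inner (A B : Matrix m n ℂ) :
    (A * Bᴴ).trace.re = ⟪frobeniusVec A, frobeniusVec B⟫_ℝ := by
  simp [frobeniusVec, PiLp.inner_apply, trace, mul_apply, Fintype.sum_prod_type, Complex.inner,
    mul_comm]

theorem posSemidef_re_trace_mul_conjTranspose [Finite ι] (L : ι → Matrix m n ℂ) :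
    (of fun i j => (L i * (L j)ᴴ).trace.re : Matrix ι ι ℝ).PosSemidef := by
  have hgram : (of fun i j => (L i * (L j)ᴴ).trace.re : Matrix ι ι ℝ) = gram ℝ (frobeniusVec ∘ L) :=
    Matrix.ext fun i j => re_trace_mul_conjTranspose_eq_real_inner (L i) (L j)
  exact hgram ▸ posSemidef_gram ℝ _

end Matrix

theorem stmt1 (U : (Fin 3 → ℝ) → Matrix (Fin 2) (Fin 2) ℂ)
    (hSU : ∀ y, (U y)ᴴ * U y = 1 ∧ (U y).det = 1)
    (x : Fin 3 → ℝ) (hU : DifferentiableAt ℝ U x)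
    (L : Fin 3 → Matrix (Fin 2) (Fin 2) ℂ)
    (hL : ∀ i, L i = (U x)ᴴ * fderiv ℝ U x (Pi.single i 1))
    (𝕃 : Matrix (Fin 3) (Fin 3) ℝ)
    (h𝕃 : ∀ i j, 𝕃 i j = -((L i * L j).trace).re) :
    𝕃.IsSymm ∧ 𝕃.PosSemidef ∧ ∀ i j, 𝕃 i j = ((L i * (L j)ᴴ).trace).re := by
  have hskew (i : Fin 3) : (L i)ᴴ = -L i := by
    rw [hL i]
    exact star_star_mul_fderiv_eq_neg hU (.of_forall fun y => (hSU y).1) _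
  have hfrob (i j : Fin 3) : 𝕃 i j = ((L i * (L j)ᴴ).trace).re := by
    simp [h𝕃, hskew j]
  have hpsd : 𝕃.PosSemidef := by
    rw [show 𝕃 = of fun i j => ((L i * (L j)ᴴ).trace).re from Matrix.ext hfrob]
    exact posSemidef_re_trace_mul_conjTranspose L
  exact ⟨isHermitian_iff_isSymm.mp hpsd.isHermitian, hpsd, hfrob⟩
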